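/- In ℚ⟦X⟧ one has the composition identity T = C(X·D): the formal power series ∑_{n≥1} t(n)·X^n equals the substitution of X·(∑_{n≥0} d(n)·X^n) into C(x) = ∑_{k≥1} (k^{k−1}/k!)·x^k. Equivalently, for every n ≥ 1, t(n) = ∑_{k=1}^{n} (k^{k−1}/k!) · coeff_{X^n}( (X·D)^k ). -/

import Mathlib

open PowerSeries Filter Topology

/-- Composition `f ∘ g` of formal power series (substitution of `g` into `f`), defined
coefficientwise; this is the genuine substitution when `g` has zero constant term. -/
noncomputable def psComp {R : Type*} [CommSemiring R] (f g : PowerSeries R) : PowerSeries R :=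
  PowerSeries.mk fun n => ∑ k ∈ Finset.range (n + 1),
    PowerSeries.coeff (R := R) k f * PowerSeries.coeff (R := R) n (g ^ k)

/-- The generating function `C(x) = ∑_{k≥1} (k^{k−1}/k!)·x^k` of `C`-trees. -/
noncomputable def Cseries : PowerSeries ℚ :=
  PowerSeries.mk fun k => if k = 0 then 0 else (k : ℚ) ^ (k - 1) / (k.factorial : ℚ)

/-!
Write `θ = X · d/dX`. The recurrences say `θT = T + T·A` and `θD = D·B`, where `A` and `B`
have coefficients `∑_{m ∣ i} m t(m)` and the same sum over proper divisors. Since `A = B + θT`, the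
series `T` solves `θF · (1 - F) = F · (1 + B)`. The tree function satisfies `θC = C + C · θC`
(coefficientwise an Abel identity), and since `θ(X·D) = X·D · (1 + B)` the chain rule turns this
into the same equation for `C(X·D)`. In degree `n` that equation fixes the coefficient of `F` from
the lower ones, with the factor `n - 1`, so a solution is determined by its terms of degree `0`
and `1`; both series start with `X`.
-/

open Finset

theorem sum_range_neg_one_pow_mul_choose_mul_pow_eq_zero {R : Type*} [CommRing R] {j n : ℕ}
    (h : j < n) :
    ∑ k ∈ range (n + 1), (-1 : R) ^ (n - k) * n.choose k * (k : R) ^ j = 0 := by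
  have := congr_fun (fwdDiff_iter_pow_eq_zero_of_lt (R := R) h) 0
  rw [fwdDiff_iter_eq_sum_shift] at this
  simpa [zsmul_eq_mul] using this

-- Cayley's number of rooted labelled trees on `k` vertices; `Cseries` is its exponential
-- generating function.
def cayley (k : ℕ) : ℕ := if k = 0 then 0 else k ^ (k - 1)

noncomputable def abelPoly (R : Type*) [CommRing R] (n : ℕ) : Polynomial R :=
  ∑ p ∈ antidiagonal n, Polynomial.C ((n.choose p.1 * cayley p.1 : ℕ) : R) *
    (Polynomial.X + Polynomial.C (p.2 : R)) ^ p.2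

section Abel

open Polynomial hiding C X

variable (R : Type*) [CommRing R]

theorem derivative_abelPoly_succ (n : ℕ) :
    derivative (abelPoly R (n + 1)) =
      Polynomial.C ((n + 1 : ℕ) : R) * (abelPoly R n).comp (Polynomial.X + 1) := by
  rw [abelPoly, abelPoly, derivative_sum, Nat.sum_antidiagonal_succ', Polynomial.sum_comp,
    mul_sum]
  simp only [derivative_mul, Polynomial.derivative_C, zero_mul, zero_add, pow_zero,
    Polynomial.derivative_pow, derivative_add, Polynomial.derivative_X, add_zero, mul_one,
    mul_comp, C_comp, pow_comp, add_comp, X_comp]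
  refine sum_congr rfl fun p hp => ?_
  have hp : p.1 + p.2 = n := mem_antidiagonal.mp hp
  have hchoose : ((n + 1).choose p.1 : R) * (p.2 + 1) = (n + 1) * n.choose p.1 := by
    have h := Nat.choose_mul_succ_eq n p.1
    rw [show n + 1 - p.1 = p.2 + 1 by omega] at h
    have h' := congrArg (Nat.cast (R := R)) h
    push_cast at h'
    linear_combination -h'
  simp only [Nat.add_sub_cancel, ← mul_assoc, ← Polynomial.C_mul]
  congr 2
  · push_cast; linear_combination (cayley p.1 : R) * hchoose
  · rw [add_assoc, ← Polynomial.C_1, ← Polynomial.C_add]; push_cast; ring_nf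

-- At `-n` the term of index `i` is `(-1)^(n-i) C(n,i) i^(n-1)`, so the sum is an `n`-th finite
-- difference of a polynomial of degree `n - 1`.
theorem eval_neg_abelPoly {n : ℕ} (hn : 2 ≤ n) : (abelPoly R n).eval (-(n : R)) = 0 := by
  rw [← sum_range_neg_one_pow_mul_choose_mul_pow_eq_zero (R := R) (n := n) (j := n - 1)
      (by omega), abelPoly, eval_finsetSum,
    Nat.sum_antidiagonal_eq_sum_range_succ (fun i j => eval (-(n : R))
      (Polynomial.C ((n.choose i * cayley i : ℕ) : R) * (Polynomial.X + Polynomial.C (j : R)) ^ j))]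
  refine sum_congr rfl fun k hk => ?_
  have hk : k ≤ n := Nat.lt_succ_iff.mp (mem_range.mp hk)
  simp only [eval_mul, eval_C, eval_pow, eval_add, eval_X]
  rcases Nat.eq_zero_or_pos k with rfl | hk0
  · simp [cayley, zero_pow (by omega : n - 1 ≠ 0)]
  · have : -(n : R) + ((n - k : ℕ) : R) = -1 * k := by push_cast [Nat.cast_sub hk]; ring
    rw [this, cayley, if_neg hk0.ne', mul_pow]
    push_cast
    rw [show n - 1 = (k - 1) + (n - k) by omega, pow_add]
    ring

variable [IsAddTorsionFree R]

theorem abelPoly_eq (n : ℕ) :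
    abelPoly R n = Polynomial.C (n : R) * (Polynomial.X + Polynomial.C (n : R)) ^ (n - 1) := by
  induction n with
  | zero => simp [abelPoly, cayley]
  | succ n ih =>
    rcases Nat.eq_zero_or_pos n with rfl | hn
    · simp [abelPoly, cayley, Nat.sum_antidiagonal_succ']
    set E := abelPoly R (n + 1) -
      Polynomial.C ((n + 1 : ℕ) : R) * (Polynomial.X + Polynomial.C ((n + 1 : ℕ) : R)) ^ n
    have hE' : derivative E = 0 := by
      rw [derivative_sub, derivative_abelPoly_succ, ih, derivative_C_mul,
        Polynomial.derivative_pow]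
      simp only [derivative_add, Polynomial.derivative_X, Polynomial.derivative_C, add_zero,
        mul_one, mul_comp, C_comp, pow_comp, add_comp, X_comp]
      rw [add_assoc, ← Polynomial.C_1, ← Polynomial.C_add]
      push_cast
      ring_nf
    have hEval : E.eval (-((n + 1 : ℕ) : R)) = 0 := by
      simp only [E, eval_sub, eval_neg_abelPoly R (by omega : 2 ≤ n + 1), eval_mul, eval_C,
        eval_pow, eval_add, eval_X, neg_add_cancel, zero_pow hn.ne', mul_zero, sub_zero]
    rw [eq_C_of_derivative_eq_zero hE', eval_C] at hEval
    rw [Nat.add_sub_cancel, ← sub_eq_zero]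
    change E = 0
    rw [eq_C_of_derivative_eq_zero hE', hEval, map_zero]

end Abel

theorem sum_antidiagonal_choose_mul_cayley_mul_cayley (n : ℕ) :
    ∑ p ∈ antidiagonal n, n.choose p.1 * cayley p.1 * (p.2 * cayley p.2) =
      (n - 1) * cayley n := by
  have habel :
      ∑ p ∈ antidiagonal n, n.choose p.1 * cayley p.1 * p.2 ^ p.2 = n * n ^ (n - 1) := by
    have := congrArg (Polynomial.eval 0) (abelPoly_eq ℤ n)
    simp only [abelPoly, Polynomial.eval_finsetSum, Polynomial.eval_mul, Polynomial.eval_C,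
      Polynomial.eval_pow, Polynomial.eval_add, Polynomial.eval_X, zero_add] at this
    exact_mod_cast this
  rcases n with _ | m
  · simp [cayley]
  have hcayley : cayley (m + 1) = (m + 1) ^ m := by
    rw [cayley, if_neg m.succ_ne_zero, Nat.add_sub_cancel]
  have hpow (j : ℕ) : (j + 1) * cayley (j + 1) = (j + 1) ^ (j + 1) := by
    rw [cayley, if_neg j.succ_ne_zero, Nat.add_sub_cancel, pow_succ']
  rw [Nat.sum_antidiagonal_succ'] at habel ⊢
  simp only [hpow, Nat.choose_self, one_mul, pow_zero, mul_one, zero_mul, mul_zero, zero_add,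
    Nat.add_sub_cancel, ← hcayley] at habel ⊢
  rw [pow_succ, ← hcayley] at habel
  linarith

theorem coeff_X_mul_derivative {R : Type*} [CommSemiring R] (f : R⟦X⟧) (n : ℕ) :
    coeff n (X * d⁄dX R f) = n * coeff n f := by
  rcases n with _ | n
  · simp
  · rw [coeff_succ_X_mul, coeff_derivative]; push_cast; ring

theorem coeff_Cseries (k : ℕ) : coeff k Cseries = cayley k / k.factorial := by
  rw [Cseries, coeff_mk, cayley]
  split_ifs <;> simp

theorem X_mul_derivative_Cseries :
    X * d⁄dX ℚ Cseries = Cseries + Cseries * (X * d⁄dX ℚ Cseries) := by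
  ext n
  rw [map_add, coeff_X_mul_derivative, coeff_mul]
  simp only [coeff_X_mul_derivative, coeff_Cseries]
  have hterm : ∀ p ∈ antidiagonal n,
      (cayley p.1 / p.1.factorial : ℚ) * (p.2 * (cayley p.2 / p.2.factorial)) =
        ((n.choose p.1 * cayley p.1 * (p.2 * cayley p.2) : ℕ) : ℚ) / n.factorial := by
    intro p hp
    rw [← mem_antidiagonal.mp hp, ← Nat.add_choose_mul_factorial_mul_factorial,
      Nat.choose_symm_add]
    have : ((p.1 + p.2).choose p.2 : ℚ) ≠ 0 := by
      exact_mod_cast (Nat.choose_pos (by omega)).ne'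
    push_cast
    field_simp
  rw [sum_congr rfl hterm, ← sum_div, ← Nat.cast_sum,
    sum_antidiagonal_choose_mul_cayley_mul_cayley]
  rcases n with _ | n
  · simp [cayley]
  · push_cast
    ring

theorem psComp_eq_subst {R : Type*} [CommRing R] (f : R⟦X⟧) {g : R⟦X⟧}
    (hg : constantCoeff g = 0) : psComp f g = f.subst g := by
  ext n
  rw [psComp, coeff_mk, coeff_subst' (HasSubst.of_constantCoeff_zero' hg),
    finsum_eq_sum_of_support_subset (s := range (n + 1))]
  · simp only [smul_eq_mul]
  · intro k hk
    by_contra hkn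
    apply hk
    rw [coe_range, Set.mem_Iio, not_lt] at hkn
    have : X ^ k ∣ g ^ k := pow_dvd_pow_of_dvd (X_dvd_iff.mpr hg) k
    simp [X_pow_dvd_iff.mp this n (by omega)]

theorem X_mul_derivative_subst_mul_one_sub {R : Type*} [CommRing R] {f D B : R⟦X⟧}
    (hf : X * d⁄dX R f = f + f * (X * d⁄dX R f)) (hD : X * d⁄dX R D = D * B) :
    X * d⁄dX R (f.subst (X * D)) * (1 - f.subst (X * D)) = f.subst (X * D) * (1 + B) := by
  have hu : HasSubst (X * D) := HasSubst.of_constantCoeff_zero' (by simp)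
  have hf' := congrArg (subst (X * D)) hf
  rw [subst_mul hu, subst_add hu, subst_mul hu, subst_mul hu, subst_X hu] at hf'
  rw [derivative_subst hu, Derivation.leibniz, derivative_X, smul_eq_mul, smul_eq_mul]
  linear_combination
    (1 + B) * hf' + (X * (d⁄dX R f).subst (X * D) * (1 - f.subst (X * D))) * hD

theorem X_mul_derivative_X_pow_mul {R : Type*} [CommSemiring R] (k : ℕ) (f : R⟦X⟧) :
    X * d⁄dX R (X ^ k * f) = X ^ k * ((k : R⟦X⟧) * f + X * d⁄dX R f) := by
  rw [Derivation.leibniz, Derivation.leibniz_pow, derivative_X, smul_eq_mul, smul_eq_mul,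
    nsmul_eq_mul, smul_eq_mul, mul_one]
  rcases k with _ | k
  · simp
  · rw [Nat.add_sub_cancel, pow_succ]; push_cast; ring

theorem eq_of_X_mul_derivative_mul_one_sub_eq {R : Type*} [CommRing R] [IsDomain R] [CharZero R]
    {F G P : R⟦X⟧} (hP : constantCoeff P = 1)
    (hF : X * d⁄dX R F * (1 - F) = F * P) (hG : X * d⁄dX R G * (1 - G) = G * P)
    (hF0 : constantCoeff F = 0) (hG0 : constantCoeff G = 0) (h1 : coeff 1 F = coeff 1 G) :
    F = G := by
  -- Writing `F - G = X^k · E'` with `E'(0) ≠ 0`, the constant term of the equation for `E'`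
  -- forces `k = 1`, while `F` and `G` agree up to degree `1`.
  obtain ⟨E, hE⟩ : ∃ E, E = F - G := ⟨_, rfl⟩
  rw [← sub_eq_zero, ← hE]
  by_contra hE0
  have hEeq : X * d⁄dX R E * (1 - F) = E * (P + X * d⁄dX R G) := by
    rw [hE, map_sub]; linear_combination hF - hG
  have hk2 : 2 ≤ E.order.toNat := by
    have hk := coeff_order hE0
    by_contra! hlt
    interval_cases E.order.toNat
    · simp [hE, hF0, hG0] at hk
    · simp [hE, h1] at hk
  rw [← X_pow_order_mul_divXPowOrder (f := E), X_mul_derivative_X_pow_mul, mul_assoc,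
    mul_assoc] at hEeq
  have hconst := congrArg constantCoeff (mul_left_cancel₀ (pow_ne_zero _ X_ne_zero) hEeq)
  simp only [map_mul, map_add, map_natCast, constantCoeff_X, zero_mul, add_zero, map_sub,
    constantCoeff_one, hF0, sub_zero, mul_one, hP] at hconst
  have hc : constantCoeff E.divXPowOrder ≠ 0 :=
    constantCoeff_divXPowOrder_eq_zero_iff.not.mpr hE0
  have hk1 : (E.order.toNat : R) = 1 := mul_right_cancel₀ hc (by rw [hconst, one_mul])
  rw [Nat.cast_eq_one] at hk1
  omega

section Recurrences

variable {R : Type*} [CommRing R]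

noncomputable def properDivisorSeries (t : ℕ → R) : R⟦X⟧ :=
  PowerSeries.mk fun i => ∑ m ∈ (Nat.divisors i).erase i, (m : R) * t m

theorem coeff_mul_mk_eq_sum_range (f : R⟦X⟧) (a : ℕ → R) (n : ℕ) :
    coeff n (f * PowerSeries.mk a) = ∑ k ∈ range (n + 1), a k * coeff (n - k) f := by
  rw [mul_comm, coeff_mul, Nat.sum_antidiagonal_eq_sum_range_succ
    (fun i j => coeff i (PowerSeries.mk a) * coeff j f)]
  simp only [coeff_mk]

theorem X_mul_derivative_mk_mul_one_sub_of_rec (t : ℕ → R) (ht0 : t 0 = 0)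
    (htrec : ∀ n : ℕ, 2 ≤ n →
      ((n : R) - 1) * t n =
        ∑ i ∈ Finset.Icc 1 (n - 1), t (n - i) * ∑ m ∈ Nat.divisors i, (m : R) * t m) :
    X * d⁄dX R (PowerSeries.mk t) * (1 - PowerSeries.mk t) =
      PowerSeries.mk t * (1 + properDivisorSeries t) := by
  set A : R⟦X⟧ := PowerSeries.mk fun i => ∑ m ∈ Nat.divisors i, (m : R) * t m
  have hA : A = properDivisorSeries t + X * d⁄dX R (PowerSeries.mk t) := by
    ext i
    rw [map_add, coeff_X_mul_derivative, properDivisorSeries, coeff_mk, coeff_mk, coeff_mk]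
    rcases Nat.eq_zero_or_pos i with rfl | hi
    · simp
    · rw [← sum_erase_add _ _ (Nat.mem_divisors_self i hi.ne')]
  have hT : X * d⁄dX R (PowerSeries.mk t) = PowerSeries.mk t + PowerSeries.mk t * A := by
    ext n
    rw [coeff_X_mul_derivative, map_add, coeff_mul_mk_eq_sum_range, coeff_mk]
    simp only [coeff_mk]
    rcases lt_or_ge n 2 with hn | hn
    · interval_cases n <;> simp [ht0, sum_range_succ]
    rw [← sum_subset (s₁ := Icc 1 (n - 1))]
    · have h := htrec n hn
      simp_rw [mul_comm (t _)] at h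
      linear_combination h
    · intro i hi; simp only [mem_Icc, mem_range] at hi ⊢; omega
    · intro i hi hi'
      simp only [mem_Icc, mem_range, not_and, not_le] at hi hi'
      rcases Nat.eq_zero_or_pos i with rfl | hi0
      · simp
      · simp [show n - i = 0 by omega, ht0]
  linear_combination hT + PowerSeries.mk t * hA

theorem X_mul_derivative_mk_eq_mul_properDivisorSeries (t d : ℕ → R) (hd1 : d 1 = 0)
    (hdrec : ∀ n : ℕ, 2 ≤ n →
      (n : R) * d n =
        ∑ i ∈ Finset.Icc 2 n, d (n - i) * ∑ m ∈ (Nat.divisors i).erase i, (m : R) * t m) :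
    X * d⁄dX R (PowerSeries.mk d) = PowerSeries.mk d * properDivisorSeries t := by
  ext n
  rw [coeff_X_mul_derivative, properDivisorSeries, coeff_mul_mk_eq_sum_range, coeff_mk]
  simp only [coeff_mk]
  rcases lt_or_ge n 2 with hn | hn
  · interval_cases n <;> simp [hd1, sum_range_succ]
  rw [← sum_subset (s₁ := Icc 2 n)]
  · have h := hdrec n hn
    simp_rw [mul_comm (d _)] at h
    exact h
  · intro i hi; simp only [mem_Icc, mem_range] at hi ⊢; omega
  · intro i hi hi'
    simp only [mem_Icc, mem_range, not_and, not_le] at hi hi'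
    have : i < 2 := by omega
    interval_cases i <;> simp

end Recurrences

/-- the composition identity `T = C(X·D)` in `ℚ⟦X⟧`; equivalently, for every
`n ≥ 1`, `t n = ∑_{k=1}^{n} (k^{k−1}/k!) · coeff_{X^n}((X·D)^k)`. -/
theorem polya_eq_C_comp_XD
    (t d : ℕ → ℚ)
    (ht0 : t 0 = 0) (ht1 : t 1 = 1)
    (htrec : ∀ n : ℕ, 2 ≤ n →
      ((n : ℚ) - 1) * t n =
        ∑ i ∈ Finset.Icc 1 (n - 1), t (n - i) * ∑ m ∈ Nat.divisors i, (m : ℚ) * t m)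
    (hd0 : d 0 = 1) (hd1 : d 1 = 0)
    (hdrec : ∀ n : ℕ, 2 ≤ n →
      (n : ℚ) * d n =
        ∑ i ∈ Finset.Icc 2 n, d (n - i) * ∑ m ∈ (Nat.divisors i).erase i, (m : ℚ) * t m) :
    PowerSeries.mk t =
        psComp Cseries ((PowerSeries.X : PowerSeries ℚ) * PowerSeries.mk d) ∧
      ∀ n : ℕ, 1 ≤ n →
        t n = ∑ k ∈ Finset.Icc 1 n, ((k : ℚ) ^ (k - 1) / (k.factorial : ℚ)) *
          PowerSeries.coeff (R := ℚ) n
            (((PowerSeries.X : PowerSeries ℚ) * PowerSeries.mk d) ^ k) := by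
  have hu : constantCoeff (X * PowerSeries.mk d) = 0 := by simp
  have hmain : PowerSeries.mk t = psComp Cseries (X * PowerSeries.mk d) := by
    refine eq_of_X_mul_derivative_mul_one_sub_eq (P := 1 + properDivisorSeries t) ?_
      (X_mul_derivative_mk_mul_one_sub_of_rec t ht0 htrec) ?_ (by simp [ht0]) ?_ ?_
    · simp [properDivisorSeries]
    · rw [psComp_eq_subst _ hu]
      exact X_mul_derivative_subst_mul_one_sub X_mul_derivative_Cseries
        (X_mul_derivative_mk_eq_mul_properDivisorSeries t d hd1 hdrec)
    · simp [psComp, Cseries]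
    · simp [psComp, Cseries, sum_range_succ, hd0, ht1]
  refine ⟨hmain, fun n hn => ?_⟩
  rw [← coeff_mk n t, hmain, psComp, coeff_mk, ← sum_subset (s₁ := Icc 1 n)]
  · refine sum_congr rfl fun k hk => ?_
    rw [Cseries, coeff_mk, if_neg (by simp at hk; omega)]
  · intro k hk; simp only [mem_range, mem_Icc] at hk ⊢; omega
  · intro k hk hk'
    obtain rfl : k = 0 := by simp only [mem_range, mem_Icc] at hk hk'; omega
    simp [Cseries]
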